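/- arXiv:1305.0303 — 4 statements merged into one kernel-verified Lean document; each statement's English description precedes it below -/
import Mathlib

section
/- Let A be a real m×m matrix with m real eigenvalues counted with multiplicity, all of the same sign (all positive or all negative), and suppose A^{-1} = S B for a symmetric positive definite matrix S and symmetric matrix B. Then B is positive definite if the eigenvalues of A are positive, and negative definite if they are negative. -/
/-!
Write `S = T²` with `T` positive definite. Then `T B T` is Hermitian and `S B (T v) = T (T B T v)`,
so every eigenvalue of `T B T` is an eigenvalue of `S B = A⁻¹`, i.e. the inverse of a root of the
characteristic polynomial of `A`. If these roots are positive, `T B T` has positive eigenvalues,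
hence is positive definite, and so is its congruent `B`; the negative case is the same argument
applied to `-B`.
-/

open Matrix Polynomial

namespace Matrix

section Field

variable {n K : Type*} [Fintype n] [DecidableEq n] [Field K]

theorem mem_roots_charpoly_of_mulVec_eq_smul {A : Matrix n n K} {v : n → K} {c : K}
    (hv : v ≠ 0) (h : A *ᵥ v = c • v) : c ∈ A.charpoly.roots := by
  rw [mem_roots A.charpoly_monic.ne_zero, ← charpoly_toLin',
    ← Module.End.hasEigenvalue_iff_isRoot_charpoly]
  exact Module.End.hasEigenvalue_of_hasEigenvector
    ⟨by simpa [Module.End.mem_eigenspace_iff] using h, hv⟩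

theorem inv_mem_roots_charpoly_of_inv_mulVec_eq_smul {A : Matrix n n K} {v : n → K} {μ : K}
    (hA : IsUnit A.det) (hv : v ≠ 0) (h : A⁻¹ *ᵥ v = μ • v) : μ⁻¹ ∈ A.charpoly.roots := by
  have hv_eq : μ • A *ᵥ v = v := by
    rw [← mulVec_smul, ← h, mulVec_mulVec, mul_nonsing_inv _ hA, one_mulVec]
  have hμ : μ ≠ 0 := by
    rintro rfl
    exact hv (by simpa using hv_eq.symm)
  refine mem_roots_charpoly_of_mulVec_eq_smul hv ?_
  rw [← inv_smul_smul₀ hμ (A *ᵥ v), hv_eq]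

end Field

section RCLike

variable {n 𝕜 : Type*} [Fintype n] [DecidableEq n] [RCLike 𝕜]

open scoped ComplexOrder

theorem PosDef.exists_posDef_mul_self_eq {S : Matrix n n 𝕜} (hS : S.PosDef) :
    ∃ T : Matrix n n 𝕜, T.PosDef ∧ T * T = S := by
  open MatrixOrder in
  exact ⟨CFC.sqrt S, hS.isStrictlyPositive.sqrt.posDef, CFC.sqrt_mul_sqrt_self S⟩

theorem IsHermitian.posDef_of_forall_eigenvalue_posDef_mul_pos {S B : Matrix n n 𝕜}
    (hB : B.IsHermitian) (hS : S.PosDef)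
    (h : ∀ (μ : 𝕜) (v : n → 𝕜), v ≠ 0 → (S * B) *ᵥ v = μ • v → 0 < μ) : B.PosDef := by
  obtain ⟨T, hT, rfl⟩ := hS.exists_posDef_mul_self_eq
  have hTB : star T * B * T = T * B * T := by rw [star_eq_conjTranspose, hT.isHermitian.eq]
  have hM : (T * B * T).IsHermitian := hTB ▸ isHermitian_conjTranspose_mul_mul T hB
  have heig : ∀ i, 0 < hM.eigenvalues i := by
    intro i
    set v : n → 𝕜 := ⇑(hM.eigenvectorBasis i)
    have hv : v ≠ 0 := fun h0 ↦
      hM.eigenvectorBasis.orthonormal.ne_zero i (PiLp.ext (congrFun h0))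
    have hTv : T *ᵥ v ≠ 0 := by simpa using (mulVec_injective_of_isUnit hT.isUnit).ne hv
    have hSB : (T * T * B) *ᵥ (T *ᵥ v) = (hM.eigenvalues i : 𝕜) • (T *ᵥ v) := by
      rw [mulVec_mulVec, show T * T * B * T = T * (T * B * T) by simp only [mul_assoc],
        ← mulVec_mulVec, hM.mulVec_eigenvectorBasis, mulVec_smul,
        RCLike.real_smul_eq_coe_smul (K := 𝕜)]
    exact_mod_cast h _ _ hTv hSB
  rw [← hT.isUnit.posDef_star_left_conjugate_iff, hTB]
  exact hM.posDef_iff_eigenvalues_pos.mpr heig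

end RCLike

end Matrix

theorem inverse_factor_definite_general
    {m : ℕ} (A S B : Matrix (Fin m) (Fin m) ℝ)
    (hA : IsUnit A.det)
    (hS : S.PosDef) (hB : B.IsSymm)
    (hfact : A⁻¹ = S * B) :
    ((∀ x ∈ A.charpoly.roots, 0 < x) → B.PosDef) ∧
    ((∀ x ∈ A.charpoly.roots, x < 0) → (-B).PosDef) := by
  have hBh : B.IsHermitian := isHermitian_iff_isSymm.mpr hB
  constructor
  · intro hpos
    refine hBh.posDef_of_forall_eigenvalue_posDef_mul_pos hS fun μ v hv hμv => ?_
    rw [← hfact] at hμv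
    exact inv_pos.mp (hpos _ (inv_mem_roots_charpoly_of_inv_mulVec_eq_smul hA hv hμv))
  · intro hneg
    refine hBh.neg.posDef_of_forall_eigenvalue_posDef_mul_pos hS fun μ v hv hμv => ?_
    have hAv : A⁻¹ *ᵥ v = (-μ) • v := by
      rw [hfact, neg_smul, ← hμv, Matrix.mul_neg, neg_mulVec, neg_neg]
    exact neg_neg_iff_pos.mp
      (inv_lt_zero.mp (hneg _ (inv_mem_roots_charpoly_of_inv_mulVec_eq_smul hA hv hAv)))

/-- Lemma 1 (abstract form): let `A` be a real `m×m` matrix with `m` real eigenvalues counted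
with multiplicity, all of the same sign, and suppose `A⁻¹ = S * B` with `S` symmetric positive
definite and `B` symmetric. Then `B` is positive definite if the eigenvalues of `A` are all
positive, and negative definite if they are all negative. -/
theorem inverse_factor_definite
    {m : ℕ} (A S B : Matrix (Fin m) (Fin m) ℝ)
    (hA : IsUnit A.det)
    (hreal : A.charpoly.roots.card = m)
    (hsign : (∀ x ∈ A.charpoly.roots, 0 < x) ∨ (∀ x ∈ A.charpoly.roots, x < 0))
    (hS : S.PosDef) (hB : B.IsSymm)
    (hfact : A⁻¹ = S * B) :
    ((∀ x ∈ A.charpoly.roots, 0 < x) → B.PosDef) ∧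
    ((∀ x ∈ A.charpoly.roots, x < 0) → (-B).PosDef) :=
  inverse_factor_definite_general A S B hA hS hB hfact
end

section
/- For every Borel function F : A → ℝ^p with A ⊂ ℝ, the set of points x ∈ A at which liminf_{h→0} |F(x+h) − F(x)|/|h|^{1/p} = ∞ has Lebesgue measure zero. Consequently, for almost every x ∈ A there exist a sequence x_n → x, x_n ∈ A, x_n ≠ x, and a constant C < ∞ with |F(x_n) − F(x)| ≤ C|x_n − x|^{1/p}. -/
/-!
Cover the bad set by countably many pieces `S` of diameter `< δ` on which `‖F‖ ≤ M` and on which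
`F` expands with constant `1` at scale `δ`. Suppose moreover that every point of `S` expands with
constant `C` at scale `ρ ^ p`. Cut the ball of radius `M` in `ℝ^p` into about `(M √p / ρ) ^ p`
cubes of diameter `ρ`. Two points of `S` with images in the same cube are `δ`-close, so the
expansion with constant `1` forces them to be `ρ ^ p`-close, and then the expansion with constant
`C` forces them to be `(ρ / C) ^ p`-close. Hence `|S| ≲ (M √p / ρ) ^ p (ρ / C) ^ p = (M √p / C) ^ p`,
which is independent of `ρ`, and `C → ∞` gives `|S| = 0`.
-/

open MeasureTheory Filter Set

namespace EuclideanSpace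

variable {ι : Type*} [Fintype ι]

lemma norm_le_sqrt_card_mul {v : EuclideanSpace ℝ ι} {s : ℝ} (hs : 0 ≤ s)
    (h : ∀ i, |v i| ≤ s) : ‖v‖ ≤ √(Fintype.card ι) * s := by
  rw [EuclideanSpace.norm_eq, ← Real.sqrt_sq hs, ← Real.sqrt_mul (Nat.cast_nonneg _)]
  refine Real.sqrt_le_sqrt ?_
  calc ∑ i, ‖v i‖ ^ 2 ≤ ∑ _i : ι, s ^ 2 :=
        Finset.sum_le_sum fun i _ => pow_le_pow_left₀ (norm_nonneg _) (h i) 2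
    _ = Fintype.card ι * s ^ 2 := by simp

lemma norm_sub_le_of_floor_div_eq {s : ℝ} (hs : 0 < s) {v w : EuclideanSpace ℝ ι}
    (h : ∀ i, ⌊v i / s⌋ = ⌊w i / s⌋) : ‖v - w‖ ≤ √(Fintype.card ι) * s := by
  refine norm_le_sqrt_card_mul hs.le fun i => ?_
  have hlt := Int.abs_sub_lt_one_of_floor_eq_floor (h i)
  rw [← sub_div, abs_div, abs_of_pos hs, div_lt_one hs] at hlt
  exact hlt.le

lemma floor_div_mem_Icc {M s : ℝ} (hs : 0 < s) {v : EuclideanSpace ℝ ι} (hv : ‖v‖ ≤ M) (i : ι) :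
    ⌊v i / s⌋ ∈ Finset.Icc (-⌈M / s⌉) ⌈M / s⌉ := by
  have hvi : |v i| ≤ M := (PiLp.norm_apply_le v i).trans hv
  rw [Finset.mem_Icc, ← Int.floor_neg, ← neg_div]
  constructor
  · exact Int.floor_mono (div_le_div_of_nonneg_right (neg_le_of_abs_le hvi) hs.le)
  · exact (Int.floor_mono (div_le_div_of_nonneg_right (le_of_abs_le hvi) hs.le)).trans
      (Int.floor_le_ceil _)

lemma exists_grid_of_norm_le {M s : ℝ} (hM : 0 ≤ M) (hs : 0 < s) :
    ∃ (g : EuclideanSpace ℝ ι → ι → ℤ) (J : Finset (ι → ℤ)),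
      (J.card : ℝ) ≤ (2 * M / s + 3) ^ Fintype.card ι ∧ (∀ v, ‖v‖ ≤ M → g v ∈ J) ∧
      ∀ v w, g v = g w → ‖v - w‖ ≤ √(Fintype.card ι) * s := by
  classical
  set c := ⌈M / s⌉
  refine ⟨fun v i => ⌊v i / s⌋, Fintype.piFinset fun _ => Finset.Icc (-c) c, ?_,
    fun v hv => Fintype.mem_piFinset.mpr (floor_div_mem_Icc hs hv),
    fun v w h => norm_sub_le_of_floor_div_eq hs (congrFun h)⟩
  have hc : (0 : ℤ) ≤ c := Int.ceil_nonneg (by positivity)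
  have hcard : ((Finset.Icc (-c) c).card : ℝ) = 2 * c + 1 := by
    have h : ((2 * c + 1).toNat : ℤ) = 2 * c + 1 := Int.toNat_of_nonneg (by omega)
    rw [Int.card_Icc, show c + 1 - -c = 2 * c + 1 by ring]
    exact_mod_cast h
  rw [Fintype.card_piFinset, Finset.prod_const, Finset.card_univ]
  push_cast
  rw [hcard]
  refine pow_le_pow_left₀ (by positivity) ?_ _
  linarith [Int.ceil_lt_add_one (M / s), mul_div_assoc 2 M s]

end EuclideanSpace

lemma Real.volume_le_card_mul_of_fibers {ι : Type*} {S : Set ℝ} {g : ℝ → ι} {J : Finset ι}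
    {r : ℝ} (hJ : ∀ x ∈ S, g x ∈ J) (hr : ∀ x ∈ S, ∀ y ∈ S, g x = g y → |x - y| ≤ r) :
    volume S ≤ J.card * ENNReal.ofReal r := by
  have hfiber : ∀ z, volume {x ∈ S | g x = z} ≤ ENNReal.ofReal r := fun z =>
    (Real.volume_le_diam _).trans <| Metric.ediam_le fun x hx y hy => by
      rw [edist_dist, Real.dist_eq]
      exact ENNReal.ofReal_le_ofReal (hr x hx.1 y hy.1 (hx.2.trans hy.2.symm))
  calc volume S ≤ volume (⋃ z ∈ J, {x ∈ S | g x = z}) :=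
        measure_mono fun x hx => mem_biUnion (hJ x hx) ⟨hx, rfl⟩
    _ ≤ ∑ z ∈ J, volume {x ∈ S | g x = z} := measure_biUnion_finset_le _ _
    _ ≤ ∑ _z ∈ J, ENNReal.ofReal r := Finset.sum_le_sum fun z _ => hfiber z
    _ = J.card * ENNReal.ofReal r := by rw [Finset.sum_const, nsmul_eq_mul]

lemma lt_pow_of_rpow_one_div_lt {a b : ℝ} {p : ℕ} (hp : p ≠ 0) (ha : 0 ≤ a) (hb : 0 ≤ b)
    (h : a ^ ((1 : ℝ) / p) < b) : a < b ^ p := by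
  rwa [one_div, Real.rpow_inv_lt_iff_of_pos ha hb (by positivity), Real.rpow_natCast] at h

section Expansion

variable {p : ℕ} (A : Set ℝ) (F : ℝ → EuclideanSpace ℝ (Fin p))

/-- The paper's `liminf_{h → 0} ‖F (x + h) - F x‖ / |h| ^ (1 / p) = ∞` (over `x + h ∈ A`) says
exactly that `ExpandsAt A F C δ x` holds for every `C` with some `δ > 0`. -/
def ExpandsAt (C δ x : ℝ) : Prop :=
  ∀ h : ℝ, x + h ∈ A → 0 < |h| → |h| < δ → C * |h| ^ ((1 : ℝ) / p) < ‖F (x + h) - F x‖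

variable {A F}

lemma ExpandsAt.mono {C δ δ' x : ℝ} (hx : ExpandsAt A F C δ x) (hδ : δ' ≤ δ) :
    ExpandsAt A F C δ' x :=
  fun h hA h0 hδ' => hx h hA h0 (hδ'.trans_le hδ)

lemma ExpandsAt.lt_norm_sub {C δ x y : ℝ} (hx : ExpandsAt A F C δ x) (hy : y ∈ A) (hyx : y ≠ x)
    (hδ : |y - x| < δ) : C * |y - x| ^ ((1 : ℝ) / p) < ‖F y - F x‖ := by
  have hlt := hx (y - x) (by rwa [add_sub_cancel]) (abs_pos.mpr (sub_ne_zero.mpr hyx)) hδ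
  rwa [add_sub_cancel] at hlt

lemma abs_sub_le_of_norm_sub_le (hp : 0 < p) {C δ ρ x y : ℝ} (hC : 0 < C) (hρ : 0 ≤ ρ)
    (hy : y ∈ A) (hxy : |y - x| < δ) (h1 : ExpandsAt A F 1 δ x)
    (hCρ : ExpandsAt A F C (ρ ^ p) x) (hF : ‖F y - F x‖ ≤ ρ) : |y - x| ≤ (ρ / C) ^ p := by
  rcases eq_or_ne y x with rfl | hyx
  · simp only [sub_self, abs_zero]; positivity
  have hsmall : |y - x| < ρ ^ p := lt_pow_of_rpow_one_div_lt hp.ne' (abs_nonneg _) hρ <| by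
    simpa using (h1.lt_norm_sub hy hyx hxy).trans_le hF
  refine (lt_pow_of_rpow_one_div_lt hp.ne' (abs_nonneg _) (by positivity) ?_).le
  rw [lt_div_iff₀' hC]
  exact (hCρ.lt_norm_sub hy hyx hsmall).trans_le hF

lemma volume_le_of_expandsAt (hp : 0 < p) {S : Set ℝ} {δ M C ρ : ℝ} (hSA : S ⊆ A)
    (hSδ : ∀ x ∈ S, ∀ y ∈ S, |y - x| < δ) (hM0 : 0 ≤ M) (hM : ∀ x ∈ S, ‖F x‖ ≤ M)
    (h1 : ∀ x ∈ S, ExpandsAt A F 1 δ x) (hC : 0 < C) (hρ0 : 0 < ρ) (hρ1 : ρ ≤ 1)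
    (hCρ : ∀ x ∈ S, ExpandsAt A F C (ρ ^ p) x) :
    volume S ≤ ENNReal.ofReal ((2 * M * √p + 3) ^ p / C ^ p) := by
  have hsqrt : 0 < √(p : ℝ) := Real.sqrt_pos.mpr (by exact_mod_cast hp)
  obtain ⟨g, J, hJcard, hJ, hg⟩ :=
    EuclideanSpace.exists_grid_of_norm_le (ι := Fin p) hM0 (div_pos hρ0 hsqrt)
  rw [Fintype.card_fin] at hJcard hg
  rw [mul_div_cancel₀ _ hsqrt.ne'] at hg
  have hfiber : ∀ x ∈ S, ∀ y ∈ S, g (F x) = g (F y) → |x - y| ≤ (ρ / C) ^ p :=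
    fun x hx y hy hxy => abs_sub_le_of_norm_sub_le hp hC hρ0.le (hSA hx) (hSδ y hy x hx)
      (h1 y hy) (hCρ y hy) (hg _ _ hxy)
  calc volume S ≤ J.card * ENNReal.ofReal ((ρ / C) ^ p) :=
        Real.volume_le_card_mul_of_fibers (fun x hx => hJ _ (hM x hx)) hfiber
    _ = ENNReal.ofReal (J.card * (ρ / C) ^ p) := by
        rw [ENNReal.ofReal_mul (by positivity), ENNReal.ofReal_natCast]
    _ ≤ ENNReal.ofReal ((2 * M * √p + 3) ^ p / C ^ p) := by
      refine ENNReal.ofReal_le_ofReal ?_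
      calc (J.card : ℝ) * (ρ / C) ^ p ≤ (2 * M / (ρ / √p) + 3) ^ p * (ρ / C) ^ p := by
            gcongr
        _ = (2 * M * √p + 3 * ρ) ^ p / C ^ p := by
            rw [← mul_pow, ← div_pow]; congr 1; field_simp
        _ ≤ (2 * M * √p + 3) ^ p / C ^ p := by gcongr; linarith

lemma volume_le_of_forall_exists_expandsAt (hp : 0 < p) {S : Set ℝ} {δ M C : ℝ} (hSA : S ⊆ A)
    (hSδ : ∀ x ∈ S, ∀ y ∈ S, |y - x| < δ) (hM0 : 0 ≤ M) (hM : ∀ x ∈ S, ‖F x‖ ≤ M)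
    (h1 : ∀ x ∈ S, ExpandsAt A F 1 δ x) (hC : 0 < C)
    (hCS : ∀ x ∈ S, ∃ η > 0, ExpandsAt A F C η x) :
    volume S ≤ ENNReal.ofReal ((2 * M * √p + 3) ^ p / C ^ p) := by
  have hle : ∀ k : ℕ, 1 / ((k : ℝ) + 1) ≤ 1 := fun k => by
    simpa using Nat.one_div_le_one_div (α := ℝ) k.zero_le
  set T : ℕ → Set ℝ := fun k => {x ∈ S | ExpandsAt A F C ((1 / ((k : ℝ) + 1)) ^ p) x}
  have hT : Monotone T := fun k l hkl x hx =>
    ⟨hx.1, hx.2.mono <| pow_le_pow_left₀ (by positivity) (Nat.one_div_le_one_div hkl) p⟩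
  have hST : S = ⋃ k, T k := by
    refine Subset.antisymm (fun x hx => ?_) (iUnion_subset fun k => sep_subset _ _)
    obtain ⟨η, hη, hx'⟩ := hCS x hx
    obtain ⟨k, hk⟩ := exists_nat_one_div_lt hη
    refine mem_iUnion.mpr ⟨k, hx, hx'.mono ?_⟩
    exact (pow_le_of_le_one (by positivity) (hle k) hp.ne').trans hk.le
  rw [hST, hT.measure_iUnion]
  exact iSup_le fun k => volume_le_of_expandsAt hp ((sep_subset _ _).trans hSA)
    (fun x hx y hy => hSδ x hx.1 y hy.1) hM0 (fun x hx => hM x hx.1) (fun x hx => h1 x hx.1) hC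
    (by positivity) (hle k) fun x hx => hx.2

lemma volume_eq_zero_of_forall_exists_expandsAt (hp : 0 < p) {S : Set ℝ} {δ M : ℝ}
    (hSA : S ⊆ A) (hSδ : ∀ x ∈ S, ∀ y ∈ S, |y - x| < δ) (hM0 : 0 ≤ M)
    (hM : ∀ x ∈ S, ‖F x‖ ≤ M) (h1 : ∀ x ∈ S, ExpandsAt A F 1 δ x)
    (hCS : ∀ x ∈ S, ∀ C, ∃ η > 0, ExpandsAt A F C η x) : volume S = 0 := by
  have hlim : Tendsto (fun n : ℕ => ENNReal.ofReal ((2 * M * √p + 3) ^ p / ((n : ℝ) + 1) ^ p))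
      atTop (nhds 0) := by
    rw [← ENNReal.ofReal_zero]
    refine ENNReal.tendsto_ofReal (tendsto_const_nhds.div_atTop ?_)
    exact (tendsto_pow_atTop hp.ne').comp
      (tendsto_atTop_add_const_right _ 1 tendsto_natCast_atTop_atTop)
  refine le_antisymm (ge_of_tendsto hlim (Eventually.of_forall fun n => ?_)) zero_le
  exact volume_le_of_forall_exists_expandsAt hp hSA hSδ hM0 hM h1 (by positivity)
    fun x hx => hCS x hx _

lemma volume_setOf_forall_exists_expandsAt_eq_zero (hp : 0 < p) :
    volume {x ∈ A | ∀ C : ℝ, ∃ δ > 0, ExpandsAt A F C δ x} = 0 := by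
  set E := {x ∈ A | ∀ C : ℝ, ∃ δ > 0, ExpandsAt A F C δ x}
  set piece : ℕ → ℕ → ℚ → Set ℝ := fun m M q => {x ∈ E | x ∈ Ioo (q : ℝ) (q + 1 / (m + 1)) ∧
    ‖F x‖ ≤ M ∧ ExpandsAt A F 1 (1 / (m + 1)) x}
  have hcover : E ⊆ ⋃ (m : ℕ) (M : ℕ) (q : ℚ), piece m M q := by
    intro x hx
    obtain ⟨δ, hδ, hx1⟩ := hx.2 1
    obtain ⟨m, hm⟩ := exists_nat_one_div_lt hδ
    obtain ⟨M, hM⟩ := exists_nat_ge ‖F x‖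
    obtain ⟨q, hq⟩ := exists_rat_btwn (sub_lt_self x (Nat.one_div_pos_of_nat (α := ℝ) (n := m)))
    simp only [mem_iUnion]
    exact ⟨m, M, q, hx, ⟨hq.2, by linarith [hq.1]⟩, hM, hx1.mono hm.le⟩
  refine measure_mono_null hcover (measure_iUnion_null fun m => measure_iUnion_null fun M =>
    measure_iUnion_null fun q => ?_)
  refine volume_eq_zero_of_forall_exists_expandsAt hp (fun x hx => hx.1.1) (fun x hx y hy => ?_)
    M.cast_nonneg (fun x hx => hx.2.2.1) (fun x hx => hx.2.2.2) fun x hx => hx.1.2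
  rw [abs_sub_lt_iff]
  constructor <;> linarith [hx.2.1.1, hx.2.1.2, hy.2.1.1, hy.2.1.2]

lemma exists_seq_of_not_forall_exists_expandsAt {x : ℝ}
    (hx : ¬ ∀ C : ℝ, ∃ δ > 0, ExpandsAt A F C δ x) :
    ∃ (C : ℝ) (u : ℕ → ℝ), Tendsto u atTop (nhds x) ∧
      ∀ n, u n ∈ A ∧ u n ≠ x ∧ ‖F (u n) - F x‖ ≤ C * |u n - x| ^ ((1 : ℝ) / p) := by
  simp only [ExpandsAt] at hx
  push Not at hx
  obtain ⟨C, hC⟩ := hx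
  have hfreq : ∃ᶠ y in nhds x,
      y ∈ A ∧ y ≠ x ∧ ‖F y - F x‖ ≤ C * |y - x| ^ ((1 : ℝ) / p) := by
    refine Metric.nhds_basis_ball.frequently_iff.mpr fun δ hδ => ?_
    obtain ⟨h, hA, h0, hhδ, hle⟩ := hC δ hδ
    exact ⟨x + h, by simpa [Real.dist_eq] using hhδ, hA, by simpa using h0, by simpa using hle⟩
  exact ⟨C, exists_seq_forall_of_frequently hfreq⟩

end Expansion

theorem holder_on_subsequence_general
    {p : ℕ} (hp : 0 < p) (A : Set ℝ)
    (F : ℝ → EuclideanSpace ℝ (Fin p)) :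
    volume {x ∈ A | ∀ C : ℝ, ∃ δ > 0, ∀ h : ℝ, x + h ∈ A → 0 < |h| → |h| < δ →
        C * |h| ^ ((1 : ℝ) / p) < ‖F (x + h) - F x‖} = 0 ∧
    (∀ᵐ x ∂volume, x ∈ A →
      ∃ (C : ℝ) (u : ℕ → ℝ), Tendsto u atTop (nhds x) ∧
        ∀ n, u n ∈ A ∧ u n ≠ x ∧ ‖F (u n) - F x‖ ≤ C * |u n - x| ^ ((1 : ℝ) / p)) := by
  have hnull := volume_setOf_forall_exists_expandsAt_eq_zero (A := A) (F := F) hp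
  refine ⟨hnull, ?_⟩
  filter_upwards [measure_eq_zero_iff_ae_notMem.mp hnull] with x hx hxA
  exact exists_seq_of_not_forall_exists_expandsAt fun h => hx ⟨hxA, h⟩

/-- (Elling 2012, case k = 1.) For every Borel function `F : A → ℝ^p` with `A ⊆ ℝ`, the set of
points `x ∈ A` at which `liminf_{h→0} ‖F(x+h) − F(x)‖ / |h|^{1/p} = ∞` is Lebesgue-null.
Consequently, for almost every `x ∈ A` there are a constant `C < ∞` and a sequence
`x_n → x`, `x_n ∈ A`, `x_n ≠ x`, with `‖F(x_n) − F(x)‖ ≤ C |x_n − x|^{1/p}`. -/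
theorem holder_on_subsequence
    {p : ℕ} (hp : 0 < p) (A : Set ℝ)
    (F : ℝ → EuclideanSpace ℝ (Fin p))
    (hF : Measurable F) :
    volume {x ∈ A | ∀ C : ℝ, ∃ δ > 0, ∀ h : ℝ, x + h ∈ A → 0 < |h| → |h| < δ →
        C * |h| ^ ((1 : ℝ) / p) < ‖F (x + h) - F x‖} = 0 ∧
    (∀ᵐ x ∂volume, x ∈ A →
      ∃ (C : ℝ) (u : ℕ → ℝ), Tendsto u atTop (nhds x) ∧
        ∀ n, u n ∈ A ∧ u n ≠ x ∧ ‖F (u n) - F x‖ ≤ C * |u n - x| ^ ((1 : ℝ) / p)) :=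
  holder_on_subsequence_general hp A F
end

section
/- For every function F : A → ℝ with A ⊂ ℝ, the set of points x ∈ A at which liminf_{h→0⁺} |F(x+h) − F(x)|/h = ∞ is of Lebesgue measure zero (Saks's theorem). -/
open MeasureTheory Set
open scoped ENNReal

namespace SaksProofAux

/-- Points that are `C`-expanding to the right (relative to `A`) at scale `1/(m+1)`. -/
def Expa (A : Set ℝ) (F : ℝ → ℝ) (C : ℝ) (m : ℕ) : Set ℝ :=
  {x | ∀ y ∈ A, x < y → y - x < 1 / ((m : ℝ) + 1) → C * (y - x) < |F y - F x|}

/-- The set in Saks's theorem. -/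
def Sat (A : Set ℝ) (F : ℝ → ℝ) : Set ℝ :=
  {x ∈ A | ∀ C : ℝ, ∃ δ > 0, ∀ h : ℝ, 0 < h → h < δ → x + h ∈ A →
      C * h < |F (x + h) - F x|}

lemma expa_mono (A : Set ℝ) (F : ℝ → ℝ) (C : ℝ) : Monotone (Expa A F C) := by
  intro m m' hmm x hx y hyA hxy hlt
  refine hx y hyA hxy (hlt.trans_le ?_)
  apply one_div_le_one_div_of_le (by positivity)
  have : (m : ℝ) ≤ (m' : ℝ) := Nat.cast_le.2 hmm
  linarith

lemma sat_mem_expa {A : Set ℝ} {F : ℝ → ℝ} {x : ℝ} (hx : x ∈ Sat A F) (C : ℝ) :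
    ∃ m, x ∈ Expa A F C m := by
  obtain ⟨δ, hδ, hP⟩ := hx.2 C
  obtain ⟨m, hm⟩ := exists_nat_one_div_lt hδ
  refine ⟨m, fun y hyA hxy hlt => ?_⟩
  have h1 : 0 < y - x := sub_pos.2 hxy
  have h2 := hP (y - x) h1 (hlt.trans hm)
    (by rw [show x + (y - x) = y from by ring]; exact hyA)
  rwa [show x + (y - x) = y from by ring] at h2

lemma vol_le_of_dist (S : Set ℝ) (d : ℝ) (hd : 0 ≤ d)
    (h : ∀ y ∈ S, ∀ z ∈ S, |y - z| ≤ d) :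
    volume S ≤ ENNReal.ofReal (2 * d) := by
  rcases S.eq_empty_or_nonempty with h0 | ⟨u, hu⟩
  · simp [h0]
  · have hsub : S ⊆ Icc (u - d) (u + d) := by
      intro z hz
      have := h z hz u hu
      have h2 := abs_le.1 this
      exact ⟨by linarith [h2.1], by linarith [h2.2]⟩
    calc volume S ≤ volume (Icc (u - d) (u + d)) := measure_mono hsub
      _ = ENNReal.ofReal (2 * d) := by
          rw [Real.volume_Icc, show u + d - (u - d) = 2 * d from by ring]

lemma subdiv (a x : ℝ) (M : ℕ) (h1 : a ≤ x) (h2 : x < a + 1) :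
    ∃ i : ℕ, i < M + 1 ∧ a + (i : ℝ) / ((M : ℝ) + 1) ≤ x ∧
      x < a + ((i : ℝ) + 1) / ((M : ℝ) + 1) := by
  have hd : (0 : ℝ) < (M : ℝ) + 1 := by positivity
  set t : ℝ := (x - a) * ((M : ℝ) + 1) with ht
  have ht0 : 0 ≤ t := mul_nonneg (by linarith) hd.le
  have htM : t < (M : ℝ) + 1 := by
    have hxa : x - a < 1 := by linarith
    calc t < 1 * ((M : ℝ) + 1) := by
            rw [ht]; exact mul_lt_mul_of_pos_right hxa hd
      _ = (M : ℝ) + 1 := one_mul _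
  have hfl0 : 0 ≤ ⌊t⌋ := Int.floor_nonneg.2 ht0
  refine ⟨⌊t⌋.toNat, ?_, ?_, ?_⟩
  · have hcast : ((⌊t⌋.toNat : ℕ) : ℝ) = ((⌊t⌋ : ℤ) : ℝ) := by
      exact_mod_cast congrArg (fun z : ℤ => (z : ℝ)) (Int.toNat_of_nonneg hfl0)
    have : ((⌊t⌋.toNat : ℕ) : ℝ) < (M : ℝ) + 1 := by
      rw [hcast]; exact lt_of_le_of_lt (Int.floor_le t) htM
    exact_mod_cast this
  · have hcast : ((⌊t⌋.toNat : ℕ) : ℝ) = ((⌊t⌋ : ℤ) : ℝ) := by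
      exact_mod_cast congrArg (fun z : ℤ => (z : ℝ)) (Int.toNat_of_nonneg hfl0)
    have hle : ((⌊t⌋.toNat : ℕ) : ℝ) ≤ t := by rw [hcast]; exact Int.floor_le t
    have : ((⌊t⌋.toNat : ℕ) : ℝ) / ((M : ℝ) + 1) ≤ x - a := by
      rw [div_le_iff₀ hd]; exact hle
    linarith
  · have hcast : ((⌊t⌋.toNat : ℕ) : ℝ) = ((⌊t⌋ : ℤ) : ℝ) := by
      exact_mod_cast congrArg (fun z : ℤ => (z : ℝ)) (Int.toNat_of_nonneg hfl0)
    have hlt2 : t < ((⌊t⌋.toNat : ℕ) : ℝ) + 1 := by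
      rw [hcast]; exact Int.lt_floor_add_one t
    have : x - a < (((⌊t⌋.toNat : ℕ) : ℝ) + 1) / ((M : ℝ) + 1) := by
      rw [lt_div_iff₀ hd]; exact hlt2
    linarith

lemma core (A : Set ℝ) (F : ℝ → ℝ) (a c : ℝ) :
    volume (Sat A F ∩ Ico a (a + 1) ∩ F ⁻¹' Ico c (c + 1)) = 0 := by
  set Φ : Set ℝ := Sat A F ∩ Ico a (a + 1) ∩ F ⁻¹' Ico c (c + 1) with hΦdef
  have hΦIco : Φ ⊆ Ico a (a + 1) := fun x hx => hx.1.2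
  have key : ∀ k : ℕ, volume Φ ≤ ENNReal.ofReal (1 / ((k : ℝ) + 1)) := by
    intro k
    have cov1 : Φ = ⋃ m : ℕ, (Φ ∩ Expa A F 1 m) := by
      apply Subset.antisymm
      · intro x hx
        obtain ⟨m, hm⟩ := sat_mem_expa hx.1.1 (1 : ℝ)
        exact mem_iUnion.2 ⟨m, hx, hm⟩
      · exact iUnion_subset fun m => inter_subset_left
    have mono1 : Monotone fun m : ℕ => Φ ∩ Expa A F 1 m := fun m m' h =>
      inter_subset_inter_right _ (expa_mono A F 1 h)
    rw [cov1, mono1.measure_iUnion]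
    refine iSup_le fun m₀ => ?_
    set N : ℕ := 2 * (m₀ + 1) * (k + 1) with hNdef
    have hN0 : 0 < N := by positivity
    have cov2 : Φ ∩ Expa A F 1 m₀ =
        ⋃ m : ℕ, (Φ ∩ Expa A F 1 m₀ ∩ Expa A F (N : ℝ) m) := by
      apply Subset.antisymm
      · intro x hx
        obtain ⟨m, hm⟩ := sat_mem_expa hx.1.1.1 ((N : ℕ) : ℝ)
        exact mem_iUnion.2 ⟨m, hx, hm⟩
      · exact iUnion_subset fun m => inter_subset_left
    have mono2 : Monotone fun m : ℕ => Φ ∩ Expa A F 1 m₀ ∩ Expa A F (N : ℝ) m :=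
      fun m m' h => inter_subset_inter_right _ (expa_mono A F _ h)
    rw [cov2, mono2.measure_iUnion]
    refine iSup_le fun m₁ => ?_
    set S : Set ℝ := Φ ∩ Expa A F 1 m₀ ∩ Expa A F (N : ℝ) m₁ with hSdef
    set Box : ℕ → ℕ → Set ℝ := fun i j =>
      S ∩ Ico (a + (i : ℝ) / ((m₀ : ℝ) + 1)) (a + ((i : ℝ) + 1) / ((m₀ : ℝ) + 1)) ∩
        F ⁻¹' Ico (c + (j : ℝ) / ((m₁ : ℝ) + 1)) (c + ((j : ℝ) + 1) / ((m₁ : ℝ) + 1))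
      with hBox
    have hNR : (0 : ℝ) < (N : ℝ) := by exact_mod_cast hN0
    have hm1R : (0 : ℝ) < (m₁ : ℝ) + 1 := by positivity
    set d : ℝ := 1 / (((m₁ : ℝ) + 1) * (N : ℝ)) with hdd
    have hd0 : 0 ≤ d := by positivity
    have aux : ∀ (i j : ℕ) (y z : ℝ), y ∈ Box i j → z ∈ Box i j → y < z →
        z - y ≤ d := by
      intro i j y z hy hz hlt
      obtain ⟨⟨hyS, hyI⟩, hyJ⟩ := hy
      obtain ⟨⟨hzS, hzI⟩, hzJ⟩ := hz
      have hzA : z ∈ A := hzS.1.1.1.1.1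
      have hy1 : y ∈ Expa A F 1 m₀ := hyS.1.2
      have hyN : y ∈ Expa A F (N : ℝ) m₁ := hyS.2
      have hIe : ((i : ℝ) + 1) / ((m₀ : ℝ) + 1) - (i : ℝ) / ((m₀ : ℝ) + 1)
          = 1 / ((m₀ : ℝ) + 1) := by ring
      have hstep0 : z - y < 1 / ((m₀ : ℝ) + 1) := by
        have h1 := hyI.1
        have h2 := hzI.2
        linarith [hyI.1, hzI.2]
      have e1 := hy1 z hzA hlt hstep0
      rw [one_mul] at e1
      have hJe : ((j : ℝ) + 1) / ((m₁ : ℝ) + 1) - (j : ℝ) / ((m₁ : ℝ) + 1)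
          = 1 / ((m₁ : ℝ) + 1) := by ring
      have hFlt : |F z - F y| < 1 / ((m₁ : ℝ) + 1) := by
        have hy' : F y ∈ Ico (c + (j : ℝ) / ((m₁ : ℝ) + 1))
            (c + ((j : ℝ) + 1) / ((m₁ : ℝ) + 1)) := hyJ
        have hz' : F z ∈ Ico (c + (j : ℝ) / ((m₁ : ℝ) + 1))
            (c + ((j : ℝ) + 1) / ((m₁ : ℝ) + 1)) := hzJ
        rw [abs_sub_lt_iff]
        exact ⟨by linarith [hy'.1, hz'.2], by linarith [hz'.1, hy'.2]⟩
      have hstep1 : z - y < 1 / ((m₁ : ℝ) + 1) := e1.trans hFlt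
      have e2 := hyN z hzA hlt hstep1
      have h3 : (N : ℝ) * (z - y) < 1 / ((m₁ : ℝ) + 1) := e2.trans hFlt
      have h4 : ((m₁ : ℝ) + 1) * ((N : ℝ) * (z - y)) <
          ((m₁ : ℝ) + 1) * (1 / ((m₁ : ℝ) + 1)) := mul_lt_mul_of_pos_left h3 hm1R
      have h5 : ((m₁ : ℝ) + 1) * (1 / ((m₁ : ℝ) + 1)) = 1 := by field_simp
      rw [hdd, le_div_iff₀ (by positivity)]
      calc (z - y) * (((m₁ : ℝ) + 1) * (N : ℝ))
          = ((m₁ : ℝ) + 1) * ((N : ℝ) * (z - y)) := by ring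
        _ ≤ 1 := by rw [h5] at h4; exact h4.le
    have pair : ∀ i j : ℕ, ∀ y ∈ Box i j, ∀ z ∈ Box i j, |y - z| ≤ d := by
      intro i j y hy z hz
      rcases lt_trichotomy y z with h | h | h
      · rw [abs_sub_comm, abs_of_pos (sub_pos.2 h)]
        exact aux i j y z hy hz h
      · simp [h, hd0]
      · rw [abs_of_pos (sub_pos.2 h)]
        exact aux i j z y hz hy h
    have boxbound : ∀ i j : ℕ, volume (Box i j) ≤ ENNReal.ofReal (2 * d) :=
      fun i j => vol_le_of_dist _ _ hd0 (pair i j)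
    have cover : S ⊆ ⋃ i ∈ Finset.range (m₀ + 1), ⋃ j ∈ Finset.range (m₁ + 1), Box i j := by
      intro x hx
      have hxI : x ∈ Ico a (a + 1) := hx.1.1.1.2
      have hxJ : F x ∈ Ico c (c + 1) := hx.1.1.2
      obtain ⟨i, hi, hi1, hi2⟩ := subdiv a x m₀ hxI.1 hxI.2
      obtain ⟨j, hj, hj1, hj2⟩ := subdiv c (F x) m₁ hxJ.1 hxJ.2
      exact mem_iUnion₂.2 ⟨i, Finset.mem_range.2 hi,
        mem_iUnion₂.2 ⟨j, Finset.mem_range.2 hj, ⟨⟨hx, ⟨hi1, hi2⟩⟩, ⟨hj1, hj2⟩⟩⟩⟩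
    have sumconst : ∀ (n : ℕ) (cE : ℝ≥0∞),
        (∑ _x ∈ Finset.range n, cE) = (n : ℝ≥0∞) * cE := fun n cE => by
      rw [Finset.sum_const, Finset.card_range, nsmul_eq_mul]
    calc volume S
        ≤ volume (⋃ i ∈ Finset.range (m₀ + 1), ⋃ j ∈ Finset.range (m₁ + 1), Box i j) :=
          measure_mono cover
      _ ≤ ∑ i ∈ Finset.range (m₀ + 1),
            volume (⋃ j ∈ Finset.range (m₁ + 1), Box i j) :=
          measure_biUnion_finset_le _ _
      _ ≤ ∑ i ∈ Finset.range (m₀ + 1), ∑ j ∈ Finset.range (m₁ + 1), volume (Box i j) :=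
          Finset.sum_le_sum fun i _ => measure_biUnion_finset_le _ _
      _ ≤ ∑ i ∈ Finset.range (m₀ + 1), ∑ j ∈ Finset.range (m₁ + 1),
            ENNReal.ofReal (2 * d) :=
          Finset.sum_le_sum fun i _ => Finset.sum_le_sum fun j _ => boxbound i j
      _ = ((m₀ + 1 : ℕ) : ℝ≥0∞) * (((m₁ + 1 : ℕ) : ℝ≥0∞) * ENNReal.ofReal (2 * d)) := by
          rw [Finset.sum_congr rfl fun i _ => sumconst (m₁ + 1) _, sumconst (m₀ + 1) _]
      _ ≤ ENNReal.ofReal (1 / ((k : ℝ) + 1)) := by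
          rw [← ENNReal.ofReal_natCast (m₀ + 1), ← ENNReal.ofReal_natCast (m₁ + 1),
            ← ENNReal.ofReal_mul (by positivity), ← ENNReal.ofReal_mul (by positivity)]
          apply ENNReal.ofReal_le_ofReal
          have hNr : (N : ℝ) = 2 * ((m₀ : ℝ) + 1) * ((k : ℝ) + 1) := by
            rw [hNdef]; push_cast; ring
          rw [hdd, hNr]
          push_cast
          apply le_of_eq
          have hk1 : (0 : ℝ) < (k : ℝ) + 1 := by positivity
          have hm0 : (0 : ℝ) < (m₀ : ℝ) + 1 := by positivity
          field_simp
  by_contra hne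
  have hfin : volume Φ ≠ ⊤ := by
    refine ne_top_of_le_ne_top ?_ (measure_mono hΦIco)
    rw [Real.volume_Ico]
    exact ENNReal.ofReal_lt_top.ne
  have hpos : 0 < (volume Φ).toReal := ENNReal.toReal_pos hne hfin
  obtain ⟨k, hk⟩ := exists_nat_one_div_lt hpos
  have hkey := key k
  have h2 : ENNReal.ofReal (1 / ((k : ℝ) + 1)) < volume Φ := by
    rw [← ENNReal.ofReal_toReal hfin]
    exact (ENNReal.ofReal_lt_ofReal_iff hpos).2 hk
  exact absurd hkey (not_le.2 h2)

end SaksProofAux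

open SaksProofAux in
/-- Saks's theorem: for every (arbitrary) function `F : A → ℝ` with `A ⊆ ℝ`, the set of points
`x ∈ A` at which `liminf_{h→0⁺} |F(x+h) − F(x)| / h = ∞` has Lebesgue measure zero. -/
theorem saks_liminf_difference_quotient (A : Set ℝ) (F : ℝ → ℝ) :
    volume {x ∈ A | ∀ C : ℝ, ∃ δ > 0, ∀ h : ℝ, 0 < h → h < δ → x + h ∈ A →
        C * h < |F (x + h) - F x|} = 0 := by
  have cover : Sat A F ⊆ ⋃ pq : ℤ × ℤ,
      (Sat A F ∩ Ico (pq.1 : ℝ) ((pq.1 : ℝ) + 1) ∩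
        F ⁻¹' Ico (pq.2 : ℝ) ((pq.2 : ℝ) + 1)) := by
    intro x hx
    exact mem_iUnion.2 ⟨(⌊x⌋, ⌊F x⌋),
      ⟨⟨hx, ⟨Int.floor_le x, Int.lt_floor_add_one x⟩⟩,
        ⟨Int.floor_le (F x), Int.lt_floor_add_one (F x)⟩⟩⟩
  have : volume (Sat A F) = 0 :=
    measure_mono_null cover (measure_iUnion_null fun pq => core A F pq.1 pq.2)
  exact this
end

section
/- Let F ⊂ I be closed in an open interval I, and suppose V : I → ℝ^m is constant on each connected component of I ∖ F, and for every ξ ∈ F, ξ = λ(V(ξ)) for a continuous function λ ∘ V on I. Then F is an interval (possibly empty or a single point). (Specifically: there cannot exist ξ₁ < η < ξ₂ with ξ₁, ξ₂ ∈ F and η ∉ F.) -/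
/-- Topological lemma from the proof of Theorem 6: let `F` be closed in the open interval
`I = Ioo a b`, let `V` be constant on every open interval contained in `I ∖ F` (i.e. on the
connected components of `I ∖ F`), and suppose `ξ = λ(V(ξ))` on `F` with `λ ∘ V` continuous on
`I`. Then no point of `I ∖ F` lies between two points of `F`; that is, `F` is an interval. -/
theorem contact_set_is_interval
    {m : ℕ} (a b : ℝ) (hab : a < b)
    (F : Set ℝ) (hFI : F ⊆ Set.Ioo a b)
    (hFclosed : ∀ x ∈ Set.Ioo a b, x ∈ closure F → x ∈ F)
    (V : ℝ → (Fin m → ℝ))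
    (lam : (Fin m → ℝ) → ℝ)
    (hVconst : ∀ c d : ℝ, Set.Ioo c d ⊆ Set.Ioo a b \ F →
        ∀ x ∈ Set.Ioo c d, ∀ y ∈ Set.Ioo c d, V x = V y)
    (hlamcont : ContinuousOn (fun ξ => lam (V ξ)) (Set.Ioo a b))
    (hfix : ∀ ξ ∈ F, lam (V ξ) = ξ) :
    ∀ ξ₁ ∈ F, ∀ ξ₂ ∈ F, ∀ η : ℝ, ξ₁ < η → η < ξ₂ → η ∈ F := by
  intro ξ₁ hξ₁ ξ₂ hξ₂ η h1 h2
  by_contra hη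
  have haξ₁ := (hFI hξ₁).1
  have hξ₂b := (hFI hξ₂).2
  -- left endpoint p and right endpoint q of the component containing η
  set p := sSup (F ∩ Set.Iic η) with hp
  set q := sInf (F ∩ Set.Ici η) with hq
  have hpne : (F ∩ Set.Iic η).Nonempty := ⟨ξ₁, hξ₁, le_of_lt h1⟩
  have hqne : (F ∩ Set.Ici η).Nonempty := ⟨ξ₂, hξ₂, le_of_lt h2⟩
  have hpbdd : BddAbove (F ∩ Set.Iic η) := ⟨η, fun x hx => hx.2⟩
  have hqbdd : BddBelow (F ∩ Set.Ici η) := ⟨η, fun x hx => hx.2⟩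
  have hple : p ≤ η := csSup_le hpne (fun x hx => hx.2)
  have hqge : η ≤ q := le_csInf hqne (fun x hx => hx.2)
  have hξ₁p : ξ₁ ≤ p := le_csSup hpbdd ⟨hξ₁, le_of_lt h1⟩
  have hqξ₂ : q ≤ ξ₂ := csInf_le hqbdd ⟨hξ₂, le_of_lt h2⟩
  have hpI : p ∈ Set.Ioo a b :=
    ⟨lt_of_lt_of_le haξ₁ hξ₁p, lt_of_le_of_lt hple (lt_trans h2 hξ₂b)⟩
  have hqI : q ∈ Set.Ioo a b :=
    ⟨lt_of_lt_of_le haξ₁ (le_trans (le_of_lt h1) hqge), lt_of_le_of_lt hqξ₂ hξ₂b⟩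
  have hpF : p ∈ F := hFclosed p hpI
    (closure_mono Set.inter_subset_left (csSup_mem_closure hpne hpbdd))
  have hqF : q ∈ F := hFclosed q hqI
    (closure_mono Set.inter_subset_left (csInf_mem_closure hqne hqbdd))
  have hpη : p < η := lt_of_le_of_ne hple (fun h => hη (h ▸ hpF))
  have hηq : η < q := lt_of_le_of_ne hqge (fun h => hη (h ▸ hqF))
  have hpq : p < q := lt_trans hpη hηq
  -- the interval ]p, q[ avoids F
  have hsub : Set.Ioo p q ⊆ Set.Ioo a b \ F := by
    intro x hx
    refine ⟨⟨lt_trans hpI.1 hx.1, lt_trans hx.2 hqI.2⟩, fun hxF => ?_⟩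
    rcases le_or_gt x η with hxη | hηx
    · exact absurd (le_csSup hpbdd ⟨hxF, hxη⟩) (not_le_of_gt hx.1)
    · exact absurd (csInf_le hqbdd ⟨hxF, le_of_lt hηx⟩) (not_le_of_gt hx.2)
  -- V (hence λ ∘ V) is constant on ]p, q[
  have hηmem : η ∈ Set.Ioo p q := ⟨hpη, hηq⟩
  set c := lam (V η) with hc
  have hconst : ∀ x ∈ Set.Ioo p q, lam (V x) = c := fun x hx => by
    rw [hVconst p q hsub x hx η hηmem]
  -- λ(V p) = c via the right limit at p
  have key : ∀ z ∈ Set.Ioo a b, Filter.NeBot (nhdsWithin z (Set.Ioo p q)) → lam (V z) = c := by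
    intro z hz hne
    have hcw : ContinuousWithinAt (fun ξ => lam (V ξ)) (Set.Ioo p q) z :=
      (hlamcont z hz).mono (fun x hx => (hsub hx).1)
    have ht1 : Filter.Tendsto (fun ξ => lam (V ξ)) (nhdsWithin z (Set.Ioo p q)) (nhds (lam (V z))) := hcw
    have ht2 : Filter.Tendsto (fun ξ => lam (V ξ)) (nhdsWithin z (Set.Ioo p q)) (nhds c) := by
      refine Filter.Tendsto.congr' ?_ tendsto_const_nhds
      exact (eventually_nhdsWithin_of_forall fun x hx => (hconst x hx).symm)
    exact tendsto_nhds_unique ht1 ht2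
  have hpc : lam (V p) = c := by
    refine key p hpI ?_
    rw [nhdsWithin_Ioo_eq_nhdsGT hpq]
    infer_instance
  have hqc : lam (V q) = c := by
    refine key q hqI ?_
    rw [nhdsWithin_Ioo_eq_nhdsLT hpq]
    infer_instance
  have : p = q := by
    rw [← hfix p hpF, ← hfix q hqF, hpc, hqc]
  exact absurd this (ne_of_lt hpq)
end
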